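/- Let ((x_n,r_n)) be a system satisfying condition C_1 with sequence N_j = 2^{d j ψ(2^{-j})}, and let φ ∈ Φ. Define γ(j) = max{k ∈ N : N_k 2^{dk} ≤ 2^{-dj φ(2^{-j})} 2^{dj}}. For a dyadic cube U, δ > 1, and integer j ≥ δ·g(U), let Q̃(U,j,δ) be the set of dyadic cubes V of generation j contained in U that intersect ⋃_{k=g(U)}^{γ(j)} ⋃_{p∈T_k} B(y_p, ρ_p^δ). Then there is a constant C_d depending only on d such that #Q̃(U,j,δ) ≤ C_d · 2^{d(j-g(U))} · [ 2^{-dj φ(2^{-j})} + Σ_{g(U) ≤ k ≤ j/δ} 2^{-dk(δ - 1 - ψ(2^{-k}))} ]. -/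

import Mathlib

open Metric Set Filter

noncomputable section

/-- The dyadic cube of generation `j` in `ℝ^d` (sup norm) with corner `k · 2^{-j}`. -/
def dyadicCube (d j : ℕ) (k : Fin d → ℤ) : Set (Fin d → ℝ) :=
  {x | ∀ i, (k i : ℝ) * ((2:ℝ) ^ j)⁻¹ ≤ x i ∧ x i < ((k i : ℝ) + 1) * ((2:ℝ) ^ j)⁻¹}

/-- `n` is an irreducible index for the sequence of centers `x`. -/
def Irred {α : Type*} (x : ℕ → α) (n : ℕ) : Prop := ∀ m < n, x m ≠ x n

/-- The set `T_j` of irreducible indices whose radius lies in `(2^{-(j+1)}, 2^{-j}]`. -/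
def Tset {d : ℕ} (x : ℕ → Fin d → ℝ) (r : ℕ → ℝ) (j : ℕ) : Set ℕ :=
  {n | Irred x n ∧ ((2:ℝ) ^ (j + 1))⁻¹ < r n ∧ r n ≤ ((2:ℝ) ^ j)⁻¹}

/-- Condition `C₁` (weak redundancy). -/
def WeakRedundancy {d : ℕ} (x : ℕ → Fin d → ℝ) (r : ℕ → ℝ) (N : ℕ → ℕ) : Prop :=
  Monotone N ∧ (∀ j, 1 ≤ N j) ∧
  Tendsto (fun j : ℕ => Real.logb 2 (N j) / j) atTop (nhds 0) ∧
  ∀ j, ∃ c : ℕ → ℕ, (∀ n ∈ Tset x r j, c n < N j) ∧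
    ∀ m ∈ Tset x r j, ∀ n ∈ Tset x r j, m ≠ n → c m = c n →
      Disjoint (closedBall (x m) (r m)) (closedBall (x n) (r n))

/-- The class `Φ` of admissible modulating functions. -/
structure MemPhi (φ : ℝ → ℝ) : Prop where
  cont : Continuous φ
  mono : MonotoneOn φ (Ici 0)
  nonneg : ∀ x ∈ Ici (0:ℝ), 0 ≤ φ x
  zero : φ 0 = 0
  anti : StrictAntiOn (fun x : ℝ => x ^ (-(φ x))) (Ioi 0)
  tendsto_top : Tendsto (fun x : ℝ => x ^ (-(φ x))) (nhdsWithin 0 (Ioi 0)) atTop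
  incr : ∀ α β : ℝ, 0 < α → 0 < β →
    ∃ ε > 0, StrictMonoOn (fun x : ℝ => x ^ (α - β * φ x)) (Ioo 0 ε)

/-!
Every counted subcube meets a ball `B(x p, r p ^ δ)` with `p ∈ T_m`, `J ≤ m ≤ γ j`, whose centre
then lies within `2⁻ᵐ + 2⁻⁽ᴶ⁺¹⁾` of the centre of `U`. The colouring of condition `C₁` leaves at
most `N_m (14 · 2^(m-J))^d` such `p`, and each ball, of radius at most `2^(-mδ)`, meets at most
`(2 · 2^(j-mδ) + 2)^d` cubes of generation `j`. For `mδ ≤ j` the product is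
`≲ 2^(d(j-J)) 2^(-dm(δ-1-ψ(2⁻ᵐ)))`, using `N_m = 2^(dmψ(2⁻ᵐ))`. For `mδ > j` it is
`≲ 2^(-dJ) N_m 2^(dm)`; as `N` is monotone and `d ≥ 1` these terms grow geometrically, so their
sum is `≲ 2^(-dJ) N_γ 2^(dγ) ≤ 2^(d(j-J)) 2^(-djφ(2⁻ʲ))` by the choice of `γ = γ j`.
-/

section DyadicCube

variable {d : ℕ}

def dyadicIndex (g : ℕ) (y : Fin d → ℝ) : Fin d → ℤ := fun i => ⌊y i * 2 ^ g⌋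

lemma mem_dyadicCube_dyadicIndex (g : ℕ) (y : Fin d → ℝ) :
    y ∈ dyadicCube d g (dyadicIndex g y) := fun i => by
  rw [← div_eq_mul_inv, ← div_eq_mul_inv, div_le_iff₀ (by positivity),
    lt_div_iff₀ (by positivity)]
  exact ⟨Int.floor_le _, Int.lt_floor_add_one _⟩

lemma dist_le_of_mem_dyadicCube {g : ℕ} {k : Fin d → ℤ} {y z : Fin d → ℝ}
    (hy : y ∈ dyadicCube d g k) (hz : z ∈ dyadicCube d g k) : dist y z ≤ ((2:ℝ) ^ g)⁻¹ := by
  refine (dist_pi_le_iff (by positivity)).2 fun i => ?_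
  obtain ⟨hy₁, hy₂⟩ := hy i
  obtain ⟨hz₁, hz₂⟩ := hz i
  rw [Real.dist_eq, abs_le]
  constructor <;> linarith

def cubeCenter (J : ℕ) (K : Fin d → ℤ) : Fin d → ℝ := fun i => ((K i : ℝ) + 2⁻¹) * ((2:ℝ) ^ J)⁻¹

lemma dyadicCube_subset_closedBall_cubeCenter (J : ℕ) (K : Fin d → ℤ) :
    dyadicCube d J K ⊆ closedBall (cubeCenter J K) ((2:ℝ) ^ (J + 1))⁻¹ := by
  intro y hy
  refine mem_closedBall.2 <| (dist_pi_le_iff (by positivity)).2 fun i => ?_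
  obtain ⟨hy₁, hy₂⟩ := hy i
  have h : ((2:ℝ) ^ (J + 1))⁻¹ = 2⁻¹ * ((2:ℝ) ^ J)⁻¹ := by rw [pow_succ]; ring
  rw [Real.dist_eq, abs_le, h, cubeCenter]
  constructor <;> linarith

/-- A box of indices containing those of all generation-`j` cubes that meet `closedBall c ρ`. -/
def closedBallCubeIndices (d j : ℕ) (c : Fin d → ℝ) (ρ : ℝ) : Finset (Fin d → ℤ) :=
  Fintype.piFinset fun i => Finset.Icc (⌈(c i - ρ) * 2 ^ j⌉ - 1) ⌊(c i + ρ) * 2 ^ j⌋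

lemma mem_closedBallCubeIndices {j : ℕ} {c : Fin d → ℝ} {ρ : ℝ} {k : Fin d → ℤ}
    (h : (dyadicCube d j k ∩ closedBall c ρ).Nonempty) : k ∈ closedBallCubeIndices d j c ρ := by
  obtain ⟨y, hy, hyc⟩ := h
  refine Fintype.mem_piFinset.2 fun i => Finset.mem_Icc.2 ?_
  have hyi := abs_le.1 <| (Real.dist_eq _ _ ▸ dist_le_pi_dist y c i).trans (mem_closedBall.1 hyc)
  obtain ⟨hy₁, hy₂⟩ := hy i
  rw [← div_eq_mul_inv, div_le_iff₀ (by positivity)] at hy₁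
  rw [← div_eq_mul_inv, lt_div_iff₀ (by positivity)] at hy₂
  have h2j : (0:ℝ) < 2 ^ j := by positivity
  constructor
  · have : ⌈(c i - ρ) * 2 ^ j⌉ ≤ k i + 1 := Int.ceil_le.2 (by push_cast; nlinarith)
    omega
  · exact Int.le_floor.2 (by nlinarith)

lemma card_closedBallCubeIndices_le (j : ℕ) (c : Fin d → ℝ) {ρ : ℝ} (hρ : 0 ≤ ρ) :
    ((closedBallCubeIndices d j c ρ).card : ℝ) ≤ (2 * ρ * 2 ^ j + 2) ^ d := by
  rw [closedBallCubeIndices, Fintype.card_piFinset, Nat.cast_prod]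
  refine (Finset.prod_le_prod (fun _ _ => by positivity) fun i _ => ?_).trans_eq
    (by rw [Finset.prod_const, Finset.card_univ, Fintype.card_fin])
  have h₁ : (c i - ρ) * 2 ^ j ≤ ⌈(c i - ρ) * 2 ^ j⌉ := Int.le_ceil _
  have h₂ : (⌊(c i + ρ) * 2 ^ j⌋ : ℝ) ≤ (c i + ρ) * 2 ^ j := Int.floor_le _
  rw [Int.card_Icc, ← Int.cast_natCast, Int.toNat_eq_max]
  push_cast
  refine max_le (by linarith) (by positivity)

end DyadicCube

/-- Two distinct balls of one colour are disjoint and have radius at least `2⁻ᵍ`, so their centres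
lie in distinct generation-`g` cubes: a ball is determined by its colour and that cube. -/
lemma finite_and_ncard_le_of_colored_disjoint {d : ℕ} {ι : Type*} {S : Set ι}
    {x : ι → Fin d → ℝ} {r : ι → ℝ} {c : ι → ℕ} {n g : ℕ} {a : Fin d → ℝ} {ρ : ℝ}
    (hc : ∀ p ∈ S, c p < n)
    (hdisj : ∀ p ∈ S, ∀ q ∈ S, p ≠ q → c p = c q →
      Disjoint (closedBall (x p) (r p)) (closedBall (x q) (r q)))
    (hr : ∀ p ∈ S, ((2:ℝ) ^ g)⁻¹ ≤ r p) (hx : ∀ p ∈ S, x p ∈ closedBall a ρ) :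
    S.Finite ∧ S.ncard ≤ n * (closedBallCubeIndices d g a ρ).card := by
  set t := Finset.range n ×ˢ closedBallCubeIndices d g a ρ
  set f : ι → ℕ × (Fin d → ℤ) := fun p => (c p, dyadicIndex g (x p))
  have hmaps : ∀ p ∈ S, f p ∈ (t : Set (ℕ × (Fin d → ℤ))) := fun p hp =>
    Finset.mem_product.2 ⟨Finset.mem_range.2 (hc p hp), mem_closedBallCubeIndices
      ⟨x p, mem_dyadicCube_dyadicIndex g (x p), hx p hp⟩⟩
  have hinj : InjOn f S := by
    intro p hp q hq hpq
    by_contra hne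
    have hxp : x p ∈ closedBall (x q) (r q) := by
      have hidx : dyadicIndex g (x p) = dyadicIndex g (x q) := congrArg Prod.snd hpq
      have hxp' := hidx ▸ mem_dyadicCube_dyadicIndex g (x p)
      exact (dist_le_of_mem_dyadicCube hxp' (mem_dyadicCube_dyadicIndex g (x q))).trans (hr q hq)
    have hpos : 0 ≤ r p := (by positivity : (0:ℝ) ≤ ((2:ℝ) ^ g)⁻¹).trans (hr p hp)
    exact Set.disjoint_left.1 (hdisj p hp q hq hne (congrArg Prod.fst hpq))
      (mem_closedBall_self hpos) hxp
  refine ⟨Finite.of_finite_image (t.finite_toSet.subset (image_subset_iff.2 hmaps)) hinj, ?_⟩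
  calc S.ncard ≤ t.card := by
        simpa using Set.ncard_le_ncard_of_injOn f hmaps hinj t.finite_toSet
    _ = n * (closedBallCubeIndices d g a ρ).card := by
        rw [Finset.card_product, Finset.card_range]

section Tset

variable {d : ℕ} {x : ℕ → Fin d → ℝ} {r : ℕ → ℝ} {N : ℕ → ℕ}

lemma nonneg_of_mem_Tset {m p : ℕ} (hp : p ∈ Tset x r m) : 0 ≤ r p :=
  (by positivity : (0:ℝ) ≤ ((2:ℝ) ^ (m + 1))⁻¹).trans hp.2.1.le

lemma rpow_le_of_mem_Tset {m p : ℕ} (hp : p ∈ Tset x r m) {δ : ℝ} (hδ : 0 ≤ δ) :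
    r p ^ δ ≤ 2 ^ (-(m * δ)) := by
  have hpos := nonneg_of_mem_Tset hp
  calc r p ^ δ ≤ (((2:ℝ) ^ m)⁻¹) ^ δ := Real.rpow_le_rpow hpos hp.2.2 hδ
    _ = 2 ^ (-(m * δ)) := by
      rw [← Real.rpow_natCast, ← Real.rpow_neg zero_le_two, ← Real.rpow_mul zero_le_two, neg_mul]

/-- The indices `p ∈ T_m` whose centre is near enough to `dyadicCube d J K` for `B(x p, r p ^ δ)`
to possibly meet it. -/
def tsetNear (x : ℕ → Fin d → ℝ) (r : ℕ → ℝ) (m J : ℕ) (K : Fin d → ℤ) : Set ℕ :=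
  {p | p ∈ Tset x r m ∧ x p ∈ closedBall (cubeCenter J K) (((2:ℝ) ^ m)⁻¹ + ((2:ℝ) ^ (J + 1))⁻¹)}

lemma finite_and_ncard_tsetNear_le (hWR : WeakRedundancy x r N) (m J : ℕ) (K : Fin d → ℤ) :
    (tsetNear x r m J K).Finite ∧ (tsetNear x r m J K).ncard ≤ N m *
      (closedBallCubeIndices d (m + 2) (cubeCenter J K)
        (((2:ℝ) ^ m)⁻¹ + ((2:ℝ) ^ (J + 1))⁻¹)).card := by
  obtain ⟨c, hc, hdisj⟩ := hWR.2.2.2 m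
  refine finite_and_ncard_le_of_colored_disjoint (fun p hp => hc p hp.1)
    (fun p hp q hq => hdisj p hp.1 q hq.1) (fun p hp => ?_) fun p hp => hp.2
  refine le_trans ?_ hp.1.2.1.le
  gcongr
  · norm_num
  · omega

lemma ncard_tsetNear_le (hWR : WeakRedundancy x r N) {m J : ℕ} (hJm : J ≤ m) (K : Fin d → ℤ) :
    ((tsetNear x r m J K).ncard : ℝ) ≤ N m * (14 * 2 ^ (m - J)) ^ d := by
  refine (Nat.cast_le.2 (finite_and_ncard_tsetNear_le hWR m J K).2).trans ?_
  push_cast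
  gcongr
  refine (card_closedBallCubeIndices_le _ _ (by positivity)).trans ?_
  gcongr
  have h2 : (2:ℝ) ^ (m + 2) = 2 ^ (J + 1) * (2 * 2 ^ (m - J)) := by
    rw [← pow_succ', ← pow_add]; congr 1; omega
  have h1 : ((2:ℝ) ^ m)⁻¹ * 2 ^ (m + 2) = 4 := by
    rw [pow_add, ← mul_assoc, inv_mul_cancel₀ (by positivity)]; norm_num
  have h3 : ((2:ℝ) ^ (J + 1))⁻¹ * 2 ^ (m + 2) = 2 * 2 ^ (m - J) := by
    rw [h2, ← mul_assoc, inv_mul_cancel₀ (by positivity), one_mul]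
  have h4 : (1:ℝ) ≤ 2 ^ (m - J) := one_le_pow₀ one_le_two
  calc 2 * (((2:ℝ) ^ m)⁻¹ + ((2:ℝ) ^ (J + 1))⁻¹) * 2 ^ (m + 2) + 2
      = 2 * (((2:ℝ) ^ m)⁻¹ * 2 ^ (m + 2)) + 2 * (((2:ℝ) ^ (J + 1))⁻¹ * 2 ^ (m + 2)) + 2 := by
        ring
    _ ≤ 14 * 2 ^ (m - J) := by rw [h1, h3]; linarith

lemma mem_tsetNear {m p J : ℕ} {K : Fin d → ℤ} (hp : p ∈ Tset x r m) {δ : ℝ} (hδ : 1 ≤ δ)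
    (h : (dyadicCube d J K ∩ closedBall (x p) (r p ^ δ)).Nonempty) : p ∈ tsetNear x r m J K := by
  obtain ⟨y, hyU, hyp⟩ := h
  refine ⟨hp, mem_closedBall.2 ?_⟩
  have hρ : r p ^ δ ≤ ((2:ℝ) ^ m)⁻¹ := by
    refine (rpow_le_of_mem_Tset hp (by linarith)).trans ?_
    rw [← Real.rpow_natCast, ← Real.rpow_neg zero_le_two]
    exact Real.rpow_le_rpow_of_exponent_le one_le_two (by nlinarith [(m.cast_nonneg : (0:ℝ) ≤ m)])
  calc dist (x p) (cubeCenter J K) ≤ dist (x p) y + dist y (cubeCenter J K) := dist_triangle _ _ _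
    _ ≤ ((2:ℝ) ^ m)⁻¹ + ((2:ℝ) ^ (J + 1))⁻¹ := add_le_add
        ((dist_comm (x p) y ▸ mem_closedBall.1 hyp).trans hρ)
        (dyadicCube_subset_closedBall_cubeCenter J K hyU)

lemma card_closedBallCubeIndices_rpow_le {m p : ℕ} (hp : p ∈ Tset x r m) {δ : ℝ} (hδ : 0 ≤ δ)
    (j : ℕ) : ((closedBallCubeIndices d j (x p) (r p ^ δ)).card : ℝ) ≤
      (2 * 2 ^ ((j:ℝ) - m * δ) + 2) ^ d := by
  have hpos := nonneg_of_mem_Tset hp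
  refine (card_closedBallCubeIndices_le j (x p) (by positivity)).trans ?_
  have h : (2:ℝ) ^ ((j:ℝ) - m * δ) = 2 ^ (-(m * δ)) * 2 ^ j := by
    rw [sub_eq_neg_add, Real.rpow_add two_pos, Real.rpow_natCast]
  rw [h, mul_assoc]
  gcongr
  exact rpow_le_of_mem_Tset hp hδ

lemma ncard_subcubes_meeting_le (hWR : WeakRedundancy x r N) {δ : ℝ} (hδ : 1 ≤ δ) (J : ℕ)
    (K : Fin d → ℤ) (j n : ℕ) :
    (({k : Fin d → ℤ | dyadicCube d j k ⊆ dyadicCube d J K ∧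
        ∃ m : ℕ, J ≤ m ∧ m ≤ n ∧ ∃ p ∈ Tset x r m,
          (dyadicCube d j k ∩ closedBall (x p) (r p ^ δ)).Nonempty}).ncard : ℝ) ≤
      ∑ m ∈ Finset.Icc J n,
        (N m : ℝ) * (14 * 2 ^ (m - J)) ^ d * (2 * 2 ^ ((j:ℝ) - m * δ) + 2) ^ d := by
  have hfin m := (finite_and_ncard_tsetNear_le hWR m J K).1
  set cover := (Finset.Icc J n).biUnion fun m =>
    (hfin m).toFinset.biUnion fun p => closedBallCubeIndices d j (x p) (r p ^ δ)
  have hsub : {k : Fin d → ℤ | dyadicCube d j k ⊆ dyadicCube d J K ∧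
      ∃ m : ℕ, J ≤ m ∧ m ≤ n ∧ ∃ p ∈ Tset x r m,
        (dyadicCube d j k ∩ closedBall (x p) (r p ^ δ)).Nonempty} ⊆ cover := by
    rintro k ⟨hkU, m, hJm, hmn, p, hp, hkp⟩
    simp only [cover, Finset.coe_biUnion, Finset.mem_coe, Finset.mem_Icc, Finite.mem_toFinset,
      mem_iUnion]
    refine ⟨m, ⟨hJm, hmn⟩, p, mem_tsetNear hp hδ ?_, mem_closedBallCubeIndices hkp⟩
    obtain ⟨y, hyk, hyp⟩ := hkp
    exact ⟨y, hkU hyk, hyp⟩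
  calc _ ≤ (cover.card : ℝ) := by
        exact_mod_cast (Set.ncard_le_ncard hsub cover.finite_toSet).trans_eq (ncard_coe_finset _)
    _ ≤ ∑ m ∈ Finset.Icc J n, ∑ p ∈ (hfin m).toFinset,
          ((closedBallCubeIndices d j (x p) (r p ^ δ)).card : ℝ) := by
        exact_mod_cast Finset.card_biUnion_le.trans
          (Finset.sum_le_sum fun m _ => Finset.card_biUnion_le)
    _ ≤ ∑ m ∈ Finset.Icc J n, ((tsetNear x r m J K).ncard : ℝ) *
          (2 * 2 ^ ((j:ℝ) - m * δ) + 2) ^ d := by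
        refine Finset.sum_le_sum fun m _ => ?_
        rw [ncard_eq_toFinset_card _ (hfin m), ← nsmul_eq_mul, ← Finset.sum_const]
        exact Finset.sum_le_sum fun p hp =>
          card_closedBallCubeIndices_rpow_le ((hfin m).mem_toFinset.1 hp).1 (by linarith) j
    _ ≤ _ := Finset.sum_le_sum fun m hm => by
        gcongr
        exact ncard_tsetNear_le hWR (Finset.mem_Icc.1 hm).1 K

end Tset

lemma sum_mul_two_pow_le {N : ℕ → ℕ} (hN : Monotone N) {d : ℕ} (hd : 1 ≤ d) {s : Finset ℕ}
    {n : ℕ} (hs : ∀ m ∈ s, m ≤ n) : ∑ m ∈ s, N m * 2 ^ (d * m) ≤ 2 * (N n * 2 ^ (d * n)) := by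
  obtain ⟨e, rfl⟩ : ∃ e, d = e + 1 := ⟨d - 1, by omega⟩
  calc ∑ m ∈ s, N m * 2 ^ ((e + 1) * m) ≤ ∑ m ∈ s, N n * 2 ^ (e * n) * 2 ^ m :=
        Finset.sum_le_sum fun m hm => by
          rw [add_one_mul, pow_add, ← mul_assoc]
          gcongr
          · exact hN (hs m hm)
          · norm_num
          · exact hs m hm
    _ = N n * 2 ^ (e * n) * ∑ m ∈ s, 2 ^ m := by rw [Finset.mul_sum]
    _ ≤ N n * 2 ^ (e * n) * 2 ^ (n + 1) := by
        gcongr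
        exact (Nat.geomSum_lt le_rfl fun m hm => Nat.lt_succ_of_le (hs m hm)).le
    _ = 2 * (N n * 2 ^ ((e + 1) * n)) := by ring

section LevelCount

variable {d J j m : ℕ} {δ : ℝ}

lemma fifty_six_pow : (56:ℝ) ^ d = 14 ^ d * 4 ^ d := by rw [← mul_pow]; norm_num

lemma level_count_le_of_mul_le (hJm : J ≤ m) (hJj : J ≤ j) (hmj : m * δ ≤ j) {ψ : ℝ} :
    (2:ℝ) ^ ((d:ℝ) * m * ψ) * (14 * 2 ^ (m - J)) ^ d * (2 * 2 ^ ((j:ℝ) - m * δ) + 2) ^ d ≤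
      56 ^ d * 2 ^ (d * (j - J)) * 2 ^ (-((d:ℝ) * m * (δ - 1 - ψ))) := by
  have hX : (1:ℝ) ≤ 2 ^ ((j:ℝ) - m * δ) := Real.one_le_rpow one_le_two (by linarith)
  calc _ ≤ (2:ℝ) ^ ((d:ℝ) * m * ψ) * (14 * 2 ^ (m - J)) ^ d *
        (4 * 2 ^ ((j:ℝ) - m * δ)) ^ d := by gcongr; linarith
    _ = 56 ^ d * ((2:ℝ) ^ ((d:ℝ) * m * ψ) * (2 ^ ((m:ℝ) - J) * 2 ^ ((j:ℝ) - m * δ)) ^ d) := by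
        rw [← Nat.cast_sub hJm, Real.rpow_natCast, fifty_six_pow]
        ring
    _ = 56 ^ d * 2 ^ (d * (j - J)) * 2 ^ (-((d:ℝ) * m * (δ - 1 - ψ))) := by
        have hpow : (2:ℝ) ^ (d * (j - J)) = 2 ^ ((d:ℝ) * (j - J)) := by
          rw [← Real.rpow_natCast]; push_cast [Nat.cast_sub hJj]; rfl
        rw [hpow, ← Real.rpow_add two_pos ((m:ℝ) - J), ← Real.rpow_mul_natCast zero_le_two,
          ← Real.rpow_add two_pos, mul_assoc (56 ^ d : ℝ), ← Real.rpow_add two_pos]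
        congr 2
        ring

lemma level_count_le_of_le_mul (hJm : J ≤ m) (hjm : j ≤ m * δ) (a : ℝ) (ha : 0 ≤ a) :
    a * (14 * 2 ^ (m - J)) ^ d * (2 * 2 ^ ((j:ℝ) - m * δ) + 2) ^ d ≤
      56 ^ d / 2 ^ (d * J) * (a * 2 ^ (d * m)) := by
  have hX : (2:ℝ) ^ ((j:ℝ) - m * δ) ≤ 1 :=
    Real.rpow_le_one_of_one_le_of_nonpos one_le_two (by linarith)
  calc _ ≤ a * (14 * 2 ^ (m - J)) ^ d * 4 ^ d := by gcongr; linarith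
    _ = 56 ^ d * (a * 2 ^ (d * (m - J))) := by
        rw [fifty_six_pow, pow_mul']
        ring
    _ = 56 ^ d / 2 ^ (d * J) * (a * 2 ^ (d * m)) := by
        rw [Nat.mul_sub, pow_sub₀ _ two_ne_zero (Nat.mul_le_mul_left d hJm)]
        ring

end LevelCount

lemma sum_level_count_le {N : ℕ → ℕ} (hN : Monotone N) {d : ℕ} (hd : 1 ≤ d) {ψ : ℕ → ℝ}
    (hψ : ∀ m, (N m : ℝ) = 2 ^ ((d:ℝ) * m * ψ m)) {δ : ℝ} (hδ : 0 < δ) {J j n : ℕ} (hJj : J ≤ j)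
    {T : ℝ} (hn : (N n : ℝ) * 2 ^ ((d:ℝ) * n) ≤ T * 2 ^ ((d:ℝ) * j)) :
    ∑ m ∈ Finset.Icc J n, (N m : ℝ) * (14 * 2 ^ (m - J)) ^ d * (2 * 2 ^ ((j:ℝ) - m * δ) + 2) ^ d ≤
      2 * 56 ^ d * 2 ^ (d * (j - J)) *
        (T + ∑ k ∈ Finset.Icc J ⌊(j:ℝ) / δ⌋₊, (2:ℝ) ^ (-((d:ℝ) * k * (δ - 1 - ψ k)))) := by
  set b := ⌊(j:ℝ) / δ⌋₊
  have hb : ∀ m : ℕ, m ≤ b ↔ (m:ℝ) * δ ≤ j := fun m => by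
    rw [Nat.le_floor_iff (by positivity), le_div_iff₀ hδ]
  set S := ∑ k ∈ Finset.Icc J b, (2:ℝ) ^ (-((d:ℝ) * k * (δ - 1 - ψ k)))
  rw [← Finset.sum_filter_add_sum_filter_not _ (fun m => m ≤ b)]
  have hlow : ∑ m ∈ (Finset.Icc J n).filter (fun m => m ≤ b),
      (N m : ℝ) * (14 * 2 ^ (m - J)) ^ d * (2 * 2 ^ ((j:ℝ) - m * δ) + 2) ^ d ≤
        56 ^ d * 2 ^ (d * (j - J)) * S := by
    calc _ ≤ ∑ m ∈ (Finset.Icc J n).filter (fun m => m ≤ b),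
          56 ^ d * 2 ^ (d * (j - J)) * (2:ℝ) ^ (-((d:ℝ) * m * (δ - 1 - ψ m))) :=
          Finset.sum_le_sum fun m hm => by
            rw [Finset.mem_filter, Finset.mem_Icc] at hm
            rw [hψ]
            exact level_count_le_of_mul_le hm.1.1 hJj ((hb m).1 hm.2)
      _ ≤ ∑ m ∈ Finset.Icc J b,
          56 ^ d * 2 ^ (d * (j - J)) * (2:ℝ) ^ (-((d:ℝ) * m * (δ - 1 - ψ m))) := by
          refine Finset.sum_le_sum_of_subset_of_nonneg (fun m hm => ?_) fun _ _ _ => by positivity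
          rw [Finset.mem_filter, Finset.mem_Icc] at hm
          exact Finset.mem_Icc.2 ⟨hm.1.1, hm.2⟩
      _ = 56 ^ d * 2 ^ (d * (j - J)) * S := (Finset.mul_sum _ _ _).symm
  have hhigh : ∑ m ∈ (Finset.Icc J n).filter (fun m => ¬ m ≤ b),
      (N m : ℝ) * (14 * 2 ^ (m - J)) ^ d * (2 * 2 ^ ((j:ℝ) - m * δ) + 2) ^ d ≤
        2 * 56 ^ d * 2 ^ (d * (j - J)) * T := by
    have hmem : ∀ m ∈ (Finset.Icc J n).filter (fun m => ¬ m ≤ b), J ≤ m ∧ m ≤ n ∧ ¬ m ≤ b :=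
      fun m hm => by
        rw [Finset.mem_filter, Finset.mem_Icc] at hm
        exact ⟨hm.1.1, hm.1.2, hm.2⟩
    calc _ ≤ ∑ m ∈ (Finset.Icc J n).filter (fun m => ¬ m ≤ b),
          56 ^ d / 2 ^ (d * J) * ((N m : ℝ) * 2 ^ (d * m)) :=
          Finset.sum_le_sum fun m hm => level_count_le_of_le_mul (hmem m hm).1
            (le_of_not_ge fun h => (hmem m hm).2.2 ((hb m).2 h)) _ (N m).cast_nonneg
      _ = 56 ^ d / 2 ^ (d * J) * ((∑ m ∈ (Finset.Icc J n).filter (fun m => ¬ m ≤ b),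
          N m * 2 ^ (d * m) : ℕ) : ℝ) := by
          push_cast; rw [Finset.mul_sum]
      _ ≤ 56 ^ d / 2 ^ (d * J) * ((2 * (N n * 2 ^ (d * n)) : ℕ) : ℝ) := by
          gcongr
          exact sum_mul_two_pow_le hN hd fun m hm => (hmem m hm).2.1
      _ ≤ 56 ^ d / 2 ^ (d * J) * (2 * (T * 2 ^ (d * j))) := by
          push_cast
          gcongr 56 ^ d / 2 ^ (d * J) * (2 * ?_)
          simpa only [← Nat.cast_mul, Real.rpow_natCast] using hn
      _ = 2 * 56 ^ d * 2 ^ (d * (j - J)) * T := by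
          rw [Nat.mul_sub, pow_sub₀ _ two_ne_zero (Nat.mul_le_mul_left d hJj)]
          ring
  have hS : 0 ≤ S := Finset.sum_nonneg fun _ _ => by positivity
  have hP : (0:ℝ) ≤ 56 ^ d * 2 ^ (d * (j - J)) := by positivity
  linarith [mul_nonneg hP hS]

/-- Lemma 1 of the paper: counting the generation-`j` dyadic subcubes of `U` that meet
one of the contracted balls `B(y_p, ρ_p^δ)` for `p ∈ T_k`, `g(U) ≤ k ≤ γ(j)`. -/
theorem stmt3 (d : ℕ) (hd : 1 ≤ d) :
    ∃ C : ℝ, 0 < C ∧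
    ∀ (x : ℕ → Fin d → ℝ) (r : ℕ → ℝ) (N : ℕ → ℕ) (φ ψ : ℝ → ℝ) (γ : ℕ → ℕ),
      (∀ n i, x n i ∈ Icc (0:ℝ) 1) → (∀ n, 0 < r n) → Antitone r →
      Tendsto r atTop (nhds 0) →
      WeakRedundancy x r N → MemPhi φ →
      -- `ψ` is defined by `N_j = 2^{d j ψ(2^{-j})}`
      (∀ j : ℕ, (N j : ℝ) = 2 ^ ((d : ℝ) * j * ψ (((2:ℝ) ^ j)⁻¹))) →
      -- `γ(j) = max {k : N_k 2^{dk} ≤ 2^{-d j φ(2^{-j})} 2^{dj}}`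
      (∀ j : ℕ, IsGreatest {k : ℕ |
          (N k : ℝ) * 2 ^ ((d : ℝ) * k)
            ≤ 2 ^ (-((d : ℝ) * j * φ (((2:ℝ) ^ j)⁻¹))) * 2 ^ ((d : ℝ) * j)} (γ j)) →
      ∀ (δ : ℝ), 1 < δ →
      ∀ (J : ℕ) (K : Fin d → ℤ), (∀ i, 0 ≤ K i ∧ K i < 2 ^ J) →
      ∀ j : ℕ, δ * J ≤ (j : ℝ) →
        (({k : Fin d → ℤ | dyadicCube d j k ⊆ dyadicCube d J K ∧
            ∃ m : ℕ, J ≤ m ∧ m ≤ γ j ∧ ∃ p ∈ Tset x r m,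
              (dyadicCube d j k ∩ closedBall (x p) (r p ^ δ)).Nonempty}).ncard : ℝ)
          ≤ C * 2 ^ (d * (j - J)) *
            (2 ^ (-((d : ℝ) * j * φ (((2:ℝ) ^ j)⁻¹))) +
              ∑ k ∈ Finset.Icc J (⌊(j : ℝ) / δ⌋₊),
                2 ^ (-((d : ℝ) * k * (δ - 1 - ψ (((2:ℝ) ^ k)⁻¹))))) := by
  refine ⟨2 * 56 ^ d, by positivity, ?_⟩
  intro x r N φ ψ γ _ _ _ _ hWR _ hψ hγ δ hδ J K _ j hj
  have hJj : J ≤ j := by exact_mod_cast (le_mul_of_one_le_left J.cast_nonneg hδ.le).trans hj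
  exact (ncard_subcubes_meeting_le hWR hδ.le J K j (γ j)).trans
    (sum_level_count_le (ψ := fun k => ψ ((2 ^ k)⁻¹)) hWR.1 hd hψ (by linarith) hJj (hγ j).1)
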